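/- Let Γ ⊆ Aut(Cay(ℤ², E)) be a nontrivial subgroup such that γ(0) = 0 for all γ ∈ Γ and ⟨γ(n,m)⟩⁻¹ γ ⟨n,m⟩ ∈ Γ for all γ ∈ Γ and (n,m) ∈ ℤ² (any such Γ is finite). Then S̃_Γ, with the quotient Borel structure on Fr_Γ/Γ, is not the Schreier graph of a free Borel action of ℤ². -/

import Mathlib

namespace Paper

variable {X Y : Type*}

/-- A (simple, undirected) graph on `X`: a symmetric irreflexive set of ordered pairs. -/
def IsGraph (G : Set (X × X)) : Prop :=
  (∀ x y, (x, y) ∈ G → (y, x) ∈ G) ∧ ∀ x, (x, x) ∉ G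

/-- Connectedness (same component) relation of a graph. -/
def Conn (G : Set (X × X)) : X → X → Prop :=
  Relation.ReflTransGen fun x y => (x, y) ∈ G

/-- The reversal of a directed edge. -/
def neg (e : X × X) : X × X := (e.2, e.1)

end Paper
namespace Paper

variable {X Y : Type*}

/-- A (simple, directed) path in a graph, as a nonempty list of distinct
consecutively-adjacent vertices. -/
def IsPathL (G : Set (X × X)) (p : List X) : Prop :=
  p ≠ [] ∧ p.Nodup ∧ p.Chain' fun a b => (a, b) ∈ G

/-- A straight line (segment): a directed path such that no other path of the same
or shorter length has the same endpoints. -/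
def IsStraight (G : Set (X × X)) (p : List X) : Prop :=
  IsPathL G p ∧ ∀ q : List X, IsPathL G q → q.head? = p.head? →
    q.getLast? = p.getLast? → q.length ≤ p.length → q = p

/-- The directed edges `e` and `e'` lie on a common straight line. -/
def OnLine (G : Set (X × X)) (e e' : X × X) : Prop :=
  ∃ p, IsStraight G p ∧ [e.1, e.2] <:+: p ∧ [e'.1, e'.2] <:+: p

/-- The vertices `x` and `y` lie on a common straight line. -/
def VertsOnLine (G : Set (X × X)) (x y : X) : Prop :=
  ∃ p, IsStraight G p ∧ x ∈ p ∧ y ∈ p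

/-- A rectangle: a simple directed cycle divided into 4 straight lines. -/
def IsRect (G : Set (X × X)) (p₁ p₂ p₃ p₄ : List X) : Prop :=
  IsStraight G p₁ ∧ IsStraight G p₂ ∧ IsStraight G p₃ ∧ IsStraight G p₄ ∧
  p₁.getLast? = p₂.head? ∧ p₂.getLast? = p₃.head? ∧
  p₃.getLast? = p₄.head? ∧ p₄.getLast? = p₁.head? ∧
  (p₁ ++ p₂.tail ++ p₃.tail ++ p₄.tail).dropLast.Nodup

/-- `e ∥ e'`: the directed edges lie on a common straight line, or `-e` and `e'`
are opposite sides of a rectangle. -/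
def Parallel (G : Set (X × X)) (e e' : X × X) : Prop :=
  OnLine G e e' ∨
  ∃ p₁ p₂ p₃ p₄, IsRect G p₁ p₂ p₃ p₄ ∧
    (([e.2, e.1] <:+: p₁ ∧ [e'.1, e'.2] <:+: p₃) ∨
     ([e.2, e.1] <:+: p₃ ∧ [e'.1, e'.2] <:+: p₁) ∨
     ([e.2, e.1] <:+: p₂ ∧ [e'.1, e'.2] <:+: p₄) ∨
     ([e.2, e.1] <:+: p₄ ∧ [e'.1, e'.2] <:+: p₂))

/-- `e ⊥ e'`: directed edges of `G` in the same component which are neither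
parallel nor anti-parallel. -/
def Perp (G : Set (X × X)) (e e' : X × X) : Prop :=
  e ∈ G ∧ e' ∈ G ∧ Conn G e.1 e'.1 ∧ ¬ Parallel G e e' ∧ ¬ Parallel G (neg e) e'

/-- Adjacency in the Cayley graph of `ℤ²` with the standard generating set. -/
def LatAdj (p q : ℤ × ℤ) : Prop :=
  q = p + (1, 0) ∨ q = p + (-1, 0) ∨ q = p + (0, 1) ∨ q = p + (0, -1)

/-- A graph is locally a square lattice if every connected component is
isomorphic to the Cayley graph of `ℤ²` with the standard generating set. -/
def LocallySquareLattice (G : Set (X × X)) : Prop :=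
  ∀ x : X, ∃ φ : ℤ × ℤ → X, Function.Injective φ ∧ φ 0 = x ∧
    (∀ p q, LatAdj p q ↔ (φ p, φ q) ∈ G) ∧
    ∀ y, Conn G x y → ∃ p, φ p = y

/-- A Borel 2-coloring of the perpendicularity graph `⊥_G`. -/
def HasBorelTwoColoring [MeasurableSpace X] (G : Set (X × X)) : Prop :=
  ∃ c : X × X → Bool, Measurable c ∧ ∀ e e', Perp G e e' → c e ≠ c e'

/-- The standard generating set of `ℤ²`. -/
def stdGen : Set (ℤ × ℤ) := {(1, 0), (-1, 0), (0, 1), (0, -1)}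

/-- `G` is the Schreier graph of a free Borel action of `ℤ²` (with the standard
generating set). -/
def IsSchreierZ2 [MeasurableSpace X] (G : Set (X × X)) : Prop :=
  ∃ a : ℤ × ℤ → X → X,
    (∀ g, Measurable (a g)) ∧
    (∀ x, a 0 x = x) ∧
    (∀ g h x, a (g + h) x = a g (a h x)) ∧
    (∀ g x, a g x = x → g = 0) ∧
    G = {p | ∃ g ∈ stdGen, p.2 = a g p.1}

end Paper
namespace Paper

/-- The automorphism group of the Cayley graph of `ℤ²` (with the standard
generating set), as a subgroup of the permutations of `ℤ²`. -/
def latAut : Subgroup (Equiv.Perm (ℤ × ℤ)) where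
  carrier := {γ | ∀ p q, LatAdj p q ↔ LatAdj (γ p) (γ q)}
  one_mem' := by intro p q; exact Iff.rfl
  mul_mem' := by
    intro a b ha hb p q
    simpa [Equiv.Perm.mul_apply] using (hb p q).trans (ha (b p) (b q))
  inv_mem' := by
    intro a ha p q
    simpa using (ha (a⁻¹ p) (a⁻¹ q)).symm

/-- The translation automorphism `⟨v⟩` of the Cayley graph of `ℤ²`. -/
def trAut (v : ℤ × ℤ) : Equiv.Perm (ℤ × ℤ) := Equiv.addLeft v

/-- The shift action of `Aut(Cay(ℤ², E))` on `[0,1]^{ℤ²}`: `γ · x = x ∘ γ⁻¹`. -/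
def shiftI (g : Equiv.Perm (ℤ × ℤ)) (x : (ℤ × ℤ) → unitInterval) :
    (ℤ × ℤ) → unitInterval := fun p => x (g⁻¹ p)

/-- The free part of the shift action of `Aut(Cay(ℤ², E))` on `[0,1]^{ℤ²}`. -/
def FrSet : Set ((ℤ × ℤ) → unitInterval) :=
  {x | ∀ g ∈ latAut, g ≠ 1 → shiftI g x ≠ x}

/-- A point of the free part. -/
abbrev FrPt : Type := {x : (ℤ × ℤ) → unitInterval // x ∈ FrSet}

/-- The orbit equivalence relation of (the restriction to) `Γ` on the free part. -/
def frSetoid (Γ : Subgroup (Equiv.Perm (ℤ × ℤ))) : Setoid FrPt where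
  r x y := ∃ γ ∈ Γ, shiftI γ x.val = y.val
  iseqv := by
    constructor
    · intro x
      exact ⟨1, Γ.one_mem, by funext p; simp [shiftI]⟩
    · rintro x y ⟨γ, hγ, h⟩
      refine ⟨γ⁻¹, Γ.inv_mem hγ, ?_⟩
      funext p
      rw [← h]
      simp [shiftI]
    · rintro x y z ⟨γ, hγ, h⟩ ⟨δ, hδ, h'⟩
      refine ⟨δ * γ, Γ.mul_mem hδ hγ, ?_⟩
      rw [← h', ← h]
      funext p
      simp [shiftI, mul_inv_rev, Equiv.Perm.mul_apply]

/-- The graph `S̃_Γ` on `Fr_Γ/Γ`, with edges `([x], [⟨v⟩ · x])` for `v` in the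
standard generating set. -/
def Stilde (Γ : Subgroup (Equiv.Perm (ℤ × ℤ))) :
    Set (Quotient (frSetoid Γ) × Quotient (frSetoid Γ)) :=
  {p | ∃ (x : FrPt) (v : ℤ × ℤ), v ∈ stdGen ∧
    ∃ hv : shiftI (trAut v) x.val ∈ FrSet,
      p.1 = Quotient.mk (frSetoid Γ) x ∧
      p.2 = Quotient.mk (frSetoid Γ) ⟨shiftI (trAut v) x.val, hv⟩}

end Paper

/-!
Suppose `a` is such an action. The neighbours of `[x]` in `S̃_Γ` are the classes `[⟨e⟩ · x]`,
`e ∈ E`, and distinct translates of a free point lie in distinct `Γ`-orbits because `Γ` fixes `0`.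
Hence `a g [x] = [⟨c_x g⟩ · x]` for a unique `c_x g`, and `c_x` is a graph automorphism of
`Cay(ℤ², E)` fixing `0`. Such automorphisms are additive (rigidity of the square lattice), so `c`
is invariant under translations and `c_{γ·x} = γ ∘ c_x` for `γ ∈ Γ`.

Since `Γ` is finite, `Fr_Γ/Γ` is countably separated and the frame sets `D_d`, of points at which
`c_x` maps the standard basis to `d`, are Borel. They cover the comeagre set `Fr_Γ`, so some `D_d` is
non-meagre, and by a Baire category argument on a basic open set it meets its image under
`γ⁻¹⟨u⟩` for a suitable translation `u`. But for `γ ≠ 1` the two are disjoint.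
-/

namespace Paper

open Function MeasurableSpace

local notation "⟦" x "⟧[" Γ "]" => Quotient.mk (frSetoid Γ) x

lemma mem_stdGen_iff {v : ℤ × ℤ} :
    v ∈ stdGen ↔ v ∈ ({(1, 0), (-1, 0), (0, 1), (0, -1)} : Finset (ℤ × ℤ)) := by
  simp [stdGen]

lemma latAdj_iff {p q : ℤ × ℤ} : LatAdj p q ↔ q - p ∈ stdGen := by
  simp only [LatAdj, stdGen, Set.mem_insert_iff, Set.mem_singleton_iff, sub_eq_iff_eq_add']

lemma neg_mem_stdGen {e : ℤ × ℤ} (he : e ∈ stdGen) : -e ∈ stdGen := by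
  rw [mem_stdGen_iff] at *
  revert e
  decide

lemma neg_ne_self_of_mem_stdGen {e : ℤ × ℤ} (he : e ∈ stdGen) : -e ≠ e := by
  rw [mem_stdGen_iff] at he
  revert e
  decide

lemma eq_of_latAdj_of_latAdj {r s e₁ e₂ : ℤ × ℤ} (he₁ : e₁ ∈ stdGen) (he₂ : e₂ ∈ stdGen)
    (hne : e₁ ≠ e₂) (h₁ : LatAdj (r + e₁) s) (h₂ : LatAdj (r + e₂) s) :
    s = r ∨ (s = r + e₁ + e₂ ∧ e₂ ≠ -e₁) := by
  rw [latAdj_iff] at h₁ h₂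
  obtain ⟨a, ha, hsa⟩ : ∃ a ∈ stdGen, s = r + e₁ + a := ⟨_, h₁, by abel⟩
  obtain ⟨b, hb, hab⟩ : ∃ b ∈ stdGen, e₁ + a = e₂ + b :=
    ⟨_, h₂, by rw [hsa]; abel⟩
  subst hsa
  rw [mem_stdGen_iff] at he₁ he₂ ha hb
  have common_nbr : ∀ e₁ ∈ ({(1, 0), (-1, 0), (0, 1), (0, -1)} : Finset (ℤ × ℤ)),
      ∀ e₂ ∈ ({(1, 0), (-1, 0), (0, 1), (0, -1)} : Finset (ℤ × ℤ)),
      ∀ a ∈ ({(1, 0), (-1, 0), (0, 1), (0, -1)} : Finset (ℤ × ℤ)),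
      ∀ b ∈ ({(1, 0), (-1, 0), (0, 1), (0, -1)} : Finset (ℤ × ℤ)),
      e₁ ≠ e₂ → e₁ + a = e₂ + b → e₁ + a = 0 ∨ (a = e₂ ∧ e₂ ≠ -e₁) := by
    decide
  rcases common_nbr e₁ he₁ e₂ he₂ a ha b hb hne hab with h | ⟨rfl, h⟩
  · left; rw [add_assoc, h, add_zero]
  · exact Or.inr ⟨rfl, h⟩

lemma stdGen_induction {P : ℤ × ℤ → Prop} (zero : P 0)
    (step : ∀ r, ∀ e ∈ stdGen, P r → P (r + e)) (r : ℤ × ℤ) : P r := by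
  have step' : ∀ r, ∀ e ∈ stdGen, P (r + e) → P r := fun r e he h => by
    simpa using step (r + e) (-e) (neg_mem_stdGen he) h
  have row : ∀ m : ℤ, P (m, 0) := fun m => by
    induction m using Int.induction_on with
    | zero => exact zero
    | succ i ih => simpa using step _ (1, 0) (by simp [stdGen]) ih
    | pred i ih => exact step' _ (1, 0) (by simp [stdGen]) (by simpa using ih)
  obtain ⟨m, n⟩ := r
  induction n using Int.induction_on with
  | zero => exact row m
  | succ i ih => simpa using step _ (0, 1) (by simp [stdGen]) ih
  | pred i ih => exact step' _ (0, 1) (by simp [stdGen]) (by simpa using ih)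

section Rigidity

variable {f : ℤ × ℤ → ℤ × ℤ}

lemma map_add_sub_map_mem_stdGen (hadj : ∀ p q, LatAdj p q ↔ LatAdj (f p) (f q)) (r : ℤ × ℤ)
    {e : ℤ × ℤ} (he : e ∈ stdGen) : f (r + e) - f r ∈ stdGen :=
  latAdj_iff.1 <| (hadj _ _).1 <| latAdj_iff.2 <| by simpa using he

/-- A preimage of the fourth corner of the square spanned by `f (r + e₁)`, `f r`, `f (r + e₂)`
is a common neighbour of `r + e₁` and `r + e₂`. -/
lemma eq_of_map_eq_add_sub (hadj : ∀ p q, LatAdj p q ↔ LatAdj (f p) (f q))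
    {r s e₁ e₂ : ℤ × ℤ} (he₁ : e₁ ∈ stdGen) (he₂ : e₂ ∈ stdGen) (hne : e₁ ≠ e₂)
    (hs : f s = f (r + e₁) + f (r + e₂) - f r) :
    s = r ∨ (s = r + e₁ + e₂ ∧ e₂ ≠ -e₁) := by
  refine eq_of_latAdj_of_latAdj he₁ he₂ hne ((hadj _ _).2 ?_) ((hadj _ _).2 ?_)
  · rw [latAdj_iff, hs]
    convert map_add_sub_map_mem_stdGen hadj r he₂ using 1
    abel
  · rw [latAdj_iff, hs]
    convert map_add_sub_map_mem_stdGen hadj r he₁ using 1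
    abel

lemma map_add_add_map_sub (hf : Bijective f) (hadj : ∀ p q, LatAdj p q ↔ LatAdj (f p) (f q))
    (r : ℤ × ℤ) {e : ℤ × ℤ} (he : e ∈ stdGen) : f (r + e) + f (r - e) = f r + f r := by
  obtain ⟨s, hs⟩ := hf.2 (f (r + e) + f (r + -e) - f r)
  have hne : e ≠ -e := (neg_ne_self_of_mem_stdGen he).symm
  rcases eq_of_map_eq_add_sub hadj he (neg_mem_stdGen he) hne hs with rfl | ⟨-, h⟩
  · rw [← sub_eq_add_neg] at hs
    exact (eq_sub_iff_add_eq.1 hs).symm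
  · exact absurd rfl h

lemma map_add_add (hf : Bijective f) (hadj : ∀ p q, LatAdj p q ↔ LatAdj (f p) (f q))
    (r : ℤ × ℤ) {e₁ e₂ : ℤ × ℤ} (he₁ : e₁ ∈ stdGen) (he₂ : e₂ ∈ stdGen) (hne : e₁ ≠ e₂)
    (hne' : e₂ ≠ -e₁) : f (r + e₁ + e₂) = f (r + e₁) + f (r + e₂) - f r := by
  obtain ⟨s, hs⟩ := hf.2 (f (r + e₁) + f (r + e₂) - f r)
  rcases eq_of_map_eq_add_sub hadj he₁ he₂ hne hs with rfl | ⟨rfl, -⟩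
  · have hstraight := map_add_add_map_sub hf hadj s he₁
    have : s + e₂ = s - e₁ := hf.1 (by linear_combination -hs - hstraight)
    exact absurd (by simpa [sub_eq_add_neg] using this) hne'
  · exact hs

/-- By the straight-line and square relations above, the increment `f (r + e) - f r` does not
change when `r` moves along a generator. -/
lemma map_add_sub_map_eq (hf : Bijective f) (hadj : ∀ p q, LatAdj p q ↔ LatAdj (f p) (f q))
    {e : ℤ × ℤ} (he : e ∈ stdGen) (r : ℤ × ℤ) : f (r + e) - f r = f e - f 0 := by
  induction r using stdGen_induction with
  | zero => simp
  | step r e' he' ih =>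
    rw [← ih]
    by_cases h : e' = e
    · subst h
      have := map_add_add_map_sub hf hadj (r + e') he
      rw [add_sub_cancel_right] at this
      linear_combination this
    by_cases h' : e' = -e
    · subst h'
      rw [neg_add_cancel_right, ← sub_eq_add_neg]
      linear_combination -(map_add_add_map_sub hf hadj r he)
    · rw [map_add_add hf hadj r he' he h fun h'' => h' (neg_eq_iff_eq_neg.1 h''.symm)]
      abel

lemma map_add_of_latAdj_iff (hf : Bijective f) (hadj : ∀ p q, LatAdj p q ↔ LatAdj (f p) (f q))
    (h0 : f 0 = 0) (p q : ℤ × ℤ) : f (p + q) = f p + f q := by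
  induction q using stdGen_induction with
  | zero => simp [h0]
  | step q e he ih =>
    rw [← add_assoc]
    linear_combination map_add_sub_map_eq hf hadj he (p + q) + ih - map_add_sub_map_eq hf hadj he q

end Rigidity

lemma eq_of_map_add {f g : ℤ × ℤ → ℤ × ℤ} (hf : ∀ p q, f (p + q) = f p + f q)
    (hg : ∀ p q, g (p + q) = g p + g q) (h₁ : f (1, 0) = g (1, 0)) (h₂ : f (0, 1) = g (0, 1)) :
    f = g := by
  funext p
  have hp : p = p.1 • ((1, 0) : ℤ × ℤ) + p.2 • (0, 1) := by ext <;> simp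
  rw [hp, ← AddMonoidHom.mk'_apply f hf, ← AddMonoidHom.mk'_apply g hg, map_add, map_add,
    map_zsmul, map_zsmul, map_zsmul, map_zsmul]
  simp [h₁, h₂]

lemma trAut_apply (u p : ℤ × ℤ) : trAut u p = u + p := rfl

lemma trAut_add (u v : ℤ × ℤ) : trAut (u + v) = trAut u * trAut v :=
  Equiv.addLeft_add u v

lemma trAut_zero : trAut 0 = 1 :=
  Equiv.ext fun p => zero_add p

lemma trAut_neg (u : ℤ × ℤ) : trAut (-u) = (trAut u)⁻¹ :=
  (Equiv.addLeft_symm u).symm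

lemma trAut_mem_latAut (u : ℤ × ℤ) : trAut u ∈ latAut := fun p q => by
  rw [latAdj_iff, latAdj_iff, trAut_apply, trAut_apply, add_sub_add_left_eq_sub]

def latStab : Subgroup (Equiv.Perm (ℤ × ℤ)) :=
  latAut ⊓ MulAction.stabilizer (Equiv.Perm (ℤ × ℤ)) (0 : ℤ × ℤ)

section latStab

variable {γ : Equiv.Perm (ℤ × ℤ)}

lemma map_add_of_mem_latStab (hγ : γ ∈ latStab) (p q : ℤ × ℤ) : γ (p + q) = γ p + γ q :=
  map_add_of_latAdj_iff γ.bijective hγ.1 hγ.2 p q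

lemma map_mem_stdGen_of_mem_latStab (hγ : γ ∈ latStab) {e : ℤ × ℤ} (he : e ∈ stdGen) :
    γ e ∈ stdGen := by
  have h := map_add_sub_map_mem_stdGen hγ.1 0 he
  rwa [zero_add, show γ 0 = 0 from hγ.2, sub_zero] at h

lemma latStab_finite : (latStab : Set (Equiv.Perm (ℤ × ℤ))).Finite := by
  have hgen : stdGen.Finite := by simp [stdGen]
  refine ((hgen.prod hgen).subset ?_).of_finite_image
    (f := fun γ : Equiv.Perm (ℤ × ℤ) => (γ (1, 0), γ (0, 1))) ?_
  · rintro _ ⟨γ, hγ, rfl⟩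
    exact ⟨map_mem_stdGen_of_mem_latStab hγ (by simp [stdGen]),
      map_mem_stdGen_of_mem_latStab hγ (by simp [stdGen])⟩
  · intro γ hγ δ hδ h
    simp only [Prod.mk.injEq] at h
    exact Equiv.ext (congrFun (eq_of_map_add (map_add_of_mem_latStab hγ)
      (map_add_of_mem_latStab hδ) h.1 h.2))

lemma mul_trAut_of_mem_latStab (hγ : γ ∈ latStab) (u : ℤ × ℤ) :
    γ * trAut u = trAut (γ u) * γ :=
  Equiv.ext fun p => map_add_of_mem_latStab hγ u p

end latStab

section FrSet

lemma shiftI_one (x : (ℤ × ℤ) → unitInterval) : shiftI 1 x = x := rfl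

lemma shiftI_mul (g h : Equiv.Perm (ℤ × ℤ)) (x : (ℤ × ℤ) → unitInterval) :
    shiftI (g * h) x = shiftI g (shiftI h x) := rfl

lemma continuous_shiftI (g : Equiv.Perm (ℤ × ℤ)) : Continuous (shiftI g) :=
  continuous_pi fun _ => continuous_apply _

lemma shiftI_mem_FrSet {g : Equiv.Perm (ℤ × ℤ)} (hg : g ∈ latAut) {x : (ℤ × ℤ) → unitInterval}
    (hx : x ∈ FrSet) : shiftI g x ∈ FrSet := by
  intro h hh hne heq
  refine hx (g⁻¹ * h * g) (mul_mem (mul_mem (inv_mem hg) hh) hg) ?_ ?_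
  · rwa [Ne, mul_assoc, inv_mul_eq_one, eq_comm, mul_eq_right]
  · rw [shiftI_mul, shiftI_mul, heq, ← shiftI_mul, inv_mul_cancel, shiftI_one]

def frShift {g : Equiv.Perm (ℤ × ℤ)} (hg : g ∈ latAut) (x : FrPt) : FrPt :=
  ⟨shiftI g x, shiftI_mem_FrSet hg x.2⟩

def frTranslate (u : ℤ × ℤ) : FrPt → FrPt := frShift (trAut_mem_latAut u)

lemma frTranslate_frTranslate (u v : ℤ × ℤ) (x : FrPt) :
    frTranslate u (frTranslate v x) = frTranslate (u + v) x := by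
  simp only [frTranslate, frShift, trAut_add, shiftI_mul]

lemma frTranslate_zero (x : FrPt) : frTranslate 0 x = x := by
  simp only [frTranslate, frShift, trAut_zero, shiftI_one]

end FrSet

section Quotient

variable {Γ : Subgroup (Equiv.Perm (ℤ × ℤ))}

lemma mk_frShift (hΓ : Γ ≤ latAut) {γ : Equiv.Perm (ℤ × ℤ)} (hγ : γ ∈ Γ) (x : FrPt) :
    ⟦frShift (hΓ hγ) x⟧[Γ] = ⟦x⟧[Γ] :=
  Eq.symm <| Quotient.sound ⟨γ, hγ, rfl⟩

lemma mk_frTranslate_injective (hΓ : Γ ≤ latStab) (x : FrPt) :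
    Injective fun u => ⟦frTranslate u x⟧[Γ] := by
  intro u w h
  obtain ⟨γ, hγ, hx⟩ := Quotient.exact h
  change shiftI γ (shiftI (trAut u) x.1) = shiftI (trAut w) x.1 at hx
  have hγ' := hΓ hγ
  -- `⟨w⟩⁻¹ γ ⟨u⟩` fixes the free point `x`, so it is `1`; evaluating it at `-u` uses `γ 0 = 0`.
  have hfix : (trAut w)⁻¹ * γ * trAut u = 1 := by
    by_contra hne
    refine x.2 _ (mul_mem (mul_mem (inv_mem (trAut_mem_latAut w)) hγ'.1) (trAut_mem_latAut u))
      hne ?_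
    rw [shiftI_mul, shiftI_mul, hx, ← shiftI_mul, inv_mul_cancel, shiftI_one]
  have h0 := congrArg (fun g : Equiv.Perm (ℤ × ℤ) => g (-u)) hfix
  simp only [Equiv.Perm.mul_apply, trAut_apply, add_neg_cancel, show γ 0 = 0 from hγ'.2,
    ← trAut_neg, add_zero, Equiv.Perm.one_apply, neg_inj] at h0
  exact h0.symm

lemma mk_mem_Stilde_iff (hΓ : Γ ≤ latStab) {x : FrPt} {q : Quotient (frSetoid Γ)} :
    (⟦x⟧[Γ], q) ∈ Stilde Γ ↔ ∃ e ∈ stdGen, q = ⟦frTranslate e x⟧[Γ] := by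
  constructor
  · rintro ⟨⟨y, hy⟩, v, hv, hvy, h₁, h₂⟩
    obtain ⟨γ, hγ, rfl⟩ := Quotient.exact h₁
    have hγ' := hΓ (inv_mem hγ)
    refine ⟨γ⁻¹ v, map_mem_stdGen_of_mem_latStab hγ' hv,
      h₂.trans (Quotient.sound ⟨γ⁻¹, inv_mem hγ, ?_⟩)⟩
    change shiftI γ⁻¹ (shiftI (trAut v) (shiftI γ x)) = shiftI (trAut (γ⁻¹ v)) x
    rw [← shiftI_mul, ← shiftI_mul, mul_trAut_of_mem_latStab hγ', mul_assoc, inv_mul_cancel,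
      mul_one]
  · rintro ⟨e, he, rfl⟩
    exact ⟨x, e, he, (frTranslate e x).2, rfl, rfl⟩

end Quotient

/-- The conditions of `IsSchreierZ2 (Stilde Γ)` other than measurability. -/
structure IsStildeAction (Γ : Subgroup (Equiv.Perm (ℤ × ℤ)))
    (a : ℤ × ℤ → Quotient (frSetoid Γ) → Quotient (frSetoid Γ)) : Prop where
  zero_act : ∀ q, a 0 q = q
  add_act : ∀ g h q, a (g + h) q = a g (a h q)
  free : ∀ g q, a g q = q → g = 0
  Stilde_eq : Stilde Γ = {p | ∃ g ∈ stdGen, p.2 = a g p.1}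

section Cocycle

variable {Γ : Subgroup (Equiv.Perm (ℤ × ℤ))}
  {a : ℤ × ℤ → Quotient (frSetoid Γ) → Quotient (frSetoid Γ)}

lemma IsStildeAction.exists_eq_act (ha : IsStildeAction Γ a) {p} (hp : p ∈ Stilde Γ) :
    ∃ e ∈ stdGen, p.2 = a e p.1 := by
  rwa [ha.Stilde_eq] at hp

lemma IsStildeAction.act_mem_Stilde (ha : IsStildeAction Γ a) {e : ℤ × ℤ} (he : e ∈ stdGen)
    (q : Quotient (frSetoid Γ)) : (q, a e q) ∈ Stilde Γ := by
  rw [ha.Stilde_eq]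
  exact ⟨e, he, rfl⟩

lemma exists_act_mk_eq (hΓ : Γ ≤ latStab) (ha : IsStildeAction Γ a) (x : FrPt) (g : ℤ × ℤ) :
    ∃ u, a g ⟦x⟧[Γ] = ⟦frTranslate u x⟧[Γ] := by
  induction g using stdGen_induction with
  | zero => exact ⟨0, by rw [ha.zero_act, frTranslate_zero]⟩
  | step g e he ih =>
    obtain ⟨u, hu⟩ := ih
    obtain ⟨w, -, hw⟩ := (mk_mem_Stilde_iff hΓ).1 (ha.act_mem_Stilde he ⟦frTranslate u x⟧[Γ])
    exact ⟨w + u, by rw [add_comm, ha.add_act, hu, hw, frTranslate_frTranslate]⟩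

/-- The cocycle of the action: `a g [x] = [⟨cocycle x g⟩ · x]`. -/
noncomputable def cocycle (hΓ : Γ ≤ latStab) (ha : IsStildeAction Γ a) (x : FrPt) (g : ℤ × ℤ) :
    ℤ × ℤ :=
  (exists_act_mk_eq hΓ ha x g).choose

variable (hΓ : Γ ≤ latStab) (ha : IsStildeAction Γ a)

lemma act_mk_eq_cocycle (x : FrPt) (g : ℤ × ℤ) :
    a g ⟦x⟧[Γ] = ⟦frTranslate (cocycle hΓ ha x g) x⟧[Γ] :=
  (exists_act_mk_eq hΓ ha x g).choose_spec

lemma cocycle_eq_iff {x : FrPt} {g u : ℤ × ℤ} :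
    cocycle hΓ ha x g = u ↔ a g ⟦x⟧[Γ] = ⟦frTranslate u x⟧[Γ] := by
  rw [act_mk_eq_cocycle hΓ ha]
  exact (mk_frTranslate_injective hΓ x).eq_iff.symm

lemma cocycle_zero (x : FrPt) : cocycle hΓ ha x 0 = 0 := by
  rw [cocycle_eq_iff, ha.zero_act, frTranslate_zero]

lemma cocycle_injective (x : FrPt) : Injective (cocycle hΓ ha x) := by
  intro g h hgh
  have : a (g - h) (a h ⟦x⟧[Γ]) = a h ⟦x⟧[Γ] := by
    rw [← ha.add_act, sub_add_cancel, act_mk_eq_cocycle hΓ ha, act_mk_eq_cocycle hΓ ha, hgh]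
  exact sub_eq_zero.1 (ha.free _ _ this)

lemma cocycle_add_sub_cocycle_mem_stdGen (x : FrPt) (p : ℤ × ℤ) {e : ℤ × ℤ} (he : e ∈ stdGen) :
    cocycle hΓ ha x (p + e) - cocycle hΓ ha x p ∈ stdGen := by
  obtain ⟨w, hw, hedge⟩ := (mk_mem_Stilde_iff hΓ).1
    (ha.act_mem_Stilde he ⟦frTranslate (cocycle hΓ ha x p) x⟧[Γ])
  have : cocycle hΓ ha x (p + e) = w + cocycle hΓ ha x p := by
    rw [cocycle_eq_iff, add_comm, ha.add_act, act_mk_eq_cocycle hΓ ha, hedge,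
      frTranslate_frTranslate]
  rwa [this, add_sub_cancel_right]

lemma exists_cocycle_add_eq (x : FrPt) (p : ℤ × ℤ) {w : ℤ × ℤ} (hw : w ∈ stdGen) :
    ∃ e ∈ stdGen, cocycle hΓ ha x (p + e) = cocycle hΓ ha x p + w := by
  have hedge := (mk_mem_Stilde_iff hΓ (x := frTranslate (cocycle hΓ ha x p) x)).2 ⟨w, hw, rfl⟩
  obtain ⟨e, he, hq⟩ := ha.exists_eq_act hedge
  refine ⟨e, he, ?_⟩
  rw [cocycle_eq_iff, add_comm, ha.add_act, act_mk_eq_cocycle hΓ ha, ← hq,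
    frTranslate_frTranslate, add_comm]

lemma cocycle_surjective (x : FrPt) : Surjective (cocycle hΓ ha x) := by
  intro u
  induction u using stdGen_induction with
  | zero => exact ⟨0, cocycle_zero hΓ ha x⟩
  | step u w hw ih =>
    obtain ⟨g, rfl⟩ := ih
    obtain ⟨e, -, he⟩ := exists_cocycle_add_eq hΓ ha x g hw
    exact ⟨g + e, he⟩

lemma latAdj_iff_latAdj_cocycle (x : FrPt) (p q : ℤ × ℤ) :
    LatAdj p q ↔ LatAdj (cocycle hΓ ha x p) (cocycle hΓ ha x q) := by
  rw [latAdj_iff, latAdj_iff]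
  constructor
  · intro h
    simpa using cocycle_add_sub_cocycle_mem_stdGen hΓ ha x p h
  · intro h
    obtain ⟨e, he, hpe⟩ := exists_cocycle_add_eq hΓ ha x p h
    rw [add_sub_cancel] at hpe
    rwa [← cocycle_injective hΓ ha x hpe, add_sub_cancel_left]

lemma cocycle_add (x : FrPt) (p q : ℤ × ℤ) :
    cocycle hΓ ha x (p + q) = cocycle hΓ ha x p + cocycle hΓ ha x q :=
  map_add_of_latAdj_iff ⟨cocycle_injective hΓ ha x, cocycle_surjective hΓ ha x⟩
    (latAdj_iff_latAdj_cocycle hΓ ha x) (cocycle_zero hΓ ha x) p q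

lemma cocycle_frTranslate (w : ℤ × ℤ) (x : FrPt) :
    cocycle hΓ ha (frTranslate w x) = cocycle hΓ ha x := by
  funext g
  obtain ⟨h, rfl⟩ := cocycle_surjective hΓ ha x w
  have : cocycle hΓ ha x (g + h) = cocycle hΓ ha (frTranslate (cocycle hΓ ha x h) x) g +
      cocycle hΓ ha x h := by
    rw [cocycle_eq_iff, ha.add_act, act_mk_eq_cocycle hΓ ha x h, act_mk_eq_cocycle hΓ ha,
      frTranslate_frTranslate]
  rw [cocycle_add hΓ ha, add_left_inj] at this
  exact this.symm

lemma cocycle_frShift {γ : Equiv.Perm (ℤ × ℤ)} (hγ : γ ∈ Γ) (x : FrPt) (g : ℤ × ℤ) :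
    cocycle hΓ ha (frShift (hΓ hγ).1 x) g = γ (cocycle hΓ ha x g) := by
  rw [cocycle_eq_iff, mk_frShift (fun _ h => (hΓ h).1) hγ, act_mk_eq_cocycle hΓ ha]
  refine Quotient.sound ⟨γ, hγ, ?_⟩
  change shiftI γ (shiftI (trAut _) x.1) = shiftI (trAut _) (shiftI γ x.1)
  rw [← shiftI_mul, ← shiftI_mul, mul_trAut_of_mem_latStab (hΓ hγ)]

end Cocycle

lemma measurableSet_eq_fun_of_countablySeparated {α β : Type*} [MeasurableSpace α]
    [MeasurableSpace β] [CountablySeparated β] {f g : α → β} (hf : Measurable f)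
    (hg : Measurable g) : MeasurableSet {x | f x = g x} := by
  obtain ⟨φ, hφ, hinj⟩ := measurable_injection_nat_bool_of_countablySeparated β
  simpa only [comp_apply, hinj.eq_iff] using measurableSet_eq_fun (hφ.comp hf) (hφ.comp hg)

section Measurability

variable {Γ : Subgroup (Equiv.Perm (ℤ × ℤ))}

lemma mk_mem_image_mk_iff (hΓ : Γ ≤ latAut) {x : FrPt} {B : Set ((ℤ × ℤ) → unitInterval)} :
    ⟦x⟧[Γ] ∈ Quotient.mk (frSetoid Γ) '' (Subtype.val ⁻¹' B) ↔ ∃ γ ∈ Γ, shiftI γ x.1 ∈ B := by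
  constructor
  · rintro ⟨y, hy, hyx⟩
    obtain ⟨γ, hγ, hyx⟩ := Quotient.exact hyx
    refine ⟨γ⁻¹, inv_mem hγ, ?_⟩
    rwa [← hyx, ← shiftI_mul, inv_mul_cancel, shiftI_one]
  · rintro ⟨γ, hγ, hx⟩
    exact ⟨frShift (hΓ hγ) x, hx, mk_frShift hΓ hγ x⟩

/-- Since `Γ` is finite, the orbits of `Γ` are closed, so the saturations of a countable basis of
`[0,1]^{ℤ²}` separate them. -/
lemma countablySeparated_quotient (hΓ : Γ ≤ latStab) :
    CountablySeparated (Quotient (frSetoid Γ)) := by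
  open TopologicalSpace in
  have hΓ' : Γ ≤ latAut := fun _ h => (hΓ h).1
  refine countablySeparated_def.2 ⟨⟨(fun B => Quotient.mk _ '' (Subtype.val ⁻¹' B)) ''
    countableBasis ((ℤ × ℤ) → unitInterval), (countable_countableBasis _).image _, ?_, ?_⟩⟩
  · rintro _ ⟨B, hB, rfl⟩
    change MeasurableSet (Quotient.mk (frSetoid Γ) ⁻¹' _)
    have : Quotient.mk (frSetoid Γ) ⁻¹' (Quotient.mk _ '' (Subtype.val ⁻¹' B)) =
        Subtype.val ⁻¹' ⋃ γ ∈ (Γ : Set (Equiv.Perm (ℤ × ℤ))), shiftI γ ⁻¹' B := by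
      ext x
      simp [mk_mem_image_mk_iff hΓ']
    rw [this]
    refine MeasurableSet.preimage ?_ measurable_subtype_coe
    refine .biUnion ((latStab_finite.subset hΓ).countable) fun γ _ => ?_
    exact ((isBasis_countableBasis _).isOpen hB).measurableSet.preimage
      (continuous_shiftI γ).measurable
  · intro q₁ _ q₂ _ h
    induction q₁, q₂ using Quotient.inductionOn₂ with | _ x y => ?_
    by_contra hne
    have hxy : x.1 ∉ (fun γ => shiftI γ y.1) '' (Γ : Set (Equiv.Perm (ℤ × ℤ))) :=
      fun ⟨γ, hγ, hyx⟩ => hne <| Eq.symm <| Quotient.sound ⟨γ, hγ, hyx⟩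
    obtain ⟨B, hB, hxB, hBy⟩ := (isBasis_countableBasis _).exists_subset_of_mem_open hxy
      (((latStab_finite.subset hΓ).image _).isClosed.isOpen_compl)
    obtain ⟨γ, hγ, hyB⟩ := (mk_mem_image_mk_iff hΓ').1 <|
      (h _ ⟨B, hB, rfl⟩).1 ((mk_mem_image_mk_iff hΓ').2 ⟨1, one_mem _, hxB⟩)
    exact hBy hyB ⟨γ, hγ, rfl⟩

end Measurability

section Baire

open Topology

lemma dense_setOf_apply_ne {ι Y : Type*} [TopologicalSpace Y] [∀ y : Y, (𝓝[≠] y).NeBot]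
    [DecidableEq ι] {i j : ι} (hij : i ≠ j) : Dense {x : ι → Y | x i ≠ x j} := by
  refine dense_iff_inter_open.2 fun U hU ⟨z, hz⟩ => ?_
  have hcont : Continuous (update z j) := continuous_const.update j continuous_id
  obtain ⟨t, htU, ht⟩ := dense_iff_inter_open.1 (dense_compl_singleton (z i)) _
    (hU.preimage hcont) ⟨z j, by simpa using hz⟩
  exact ⟨update z j t, htU, by simpa [update_of_ne hij] using Ne.symm ht⟩

lemma setOf_injective_mem_residual {ι Y : Type*} [Countable ι] [TopologicalSpace Y] [T2Space Y]
    [∀ y : Y, (𝓝[≠] y).NeBot] : {x : ι → Y | Injective x} ∈ residual (ι → Y) := by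
  classical
  have : {x : ι → Y | Injective x} = ⋂ p ∈ {p : ι × ι | p.1 ≠ p.2}, {x | x p.1 ≠ x p.2} := by
    ext x
    simp [Injective, not_imp_not]
  rw [this, countable_bInter_mem (Set.to_countable _)]
  exact fun p hp => residual_of_dense_open
    (isOpen_ne_fun (continuous_apply _) (continuous_apply _)) (dense_setOf_apply_ne hp)

lemma mem_FrSet_of_injective {x : (ℤ × ℤ) → unitInterval} (hx : Injective x) : x ∈ FrSet := by
  intro g _ hg hgx
  refine hg (inv_eq_one.1 (Equiv.ext fun p => hx ?_))
  exact congrFun hgx p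

lemma FrSet_mem_residual : FrSet ∈ residual ((ℤ × ℤ) → unitInterval) :=
  Filter.mem_of_superset setOf_injective_mem_residual fun _ => mem_FrSet_of_injective

/-- A basic open set on which `A` is comeagre meets its own reindexed copy as soon as `σ` moves
its finitely many coordinates off themselves. -/
lemma exists_not_isMeagre_inter_preimage_comp {ι Y : Type*} [TopologicalSpace Y]
    [BaireSpace (ι → Y)] {A : Set (ι → Y)} (hA : BaireMeasurableSet A) (hA' : ¬IsMeagre A)
    {S : Set (Equiv.Perm ι)} (hS : ∀ F : Finset ι, ∃ σ ∈ S, ∀ i ∈ F, σ i ∉ F) :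
    ∃ σ ∈ S, ¬IsMeagre (A ∩ (· ∘ σ) ⁻¹' A) := by
  classical
  obtain ⟨U, hU, hAU⟩ := hA.residualEq_isOpen
  have hUA : IsMeagre (U \ A) :=
    (Filter.eventuallyEq_set.1 hAU).mono fun x hx h => h.2 (hx.2 h.1)
  have hAU' : IsMeagre (A \ U) :=
    (Filter.eventuallyEq_set.1 hAU).mono fun x hx h => h.2 (hx.1 h.1)
  obtain ⟨x₀, hx₀⟩ := nonempty_of_not_isMeagre fun hU' =>
    hA' ((hAU'.union hU').mono (Set.subset_sdiff_union A U))
  obtain ⟨F, t, ht, hFU⟩ := isOpen_pi_iff.1 hU x₀ hx₀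
  obtain ⟨σ, hσS, hσ⟩ := hS F
  refine ⟨σ, hσS, fun hmeagre => ?_⟩
  let e : (ι → Y) ≃ₜ (ι → Y) :=
    { toFun := (· ∘ σ)
      invFun := (· ∘ σ.symm)
      left_inv := fun x => by ext; simp
      right_inv := fun x => by ext; simp
      continuous_toFun := continuous_pi fun i => continuous_apply (σ i)
      continuous_invFun := continuous_pi fun i => continuous_apply (σ.symm i) }
  have hW : IsOpen ((F : Set ι).pi t) := isOpen_set_pi F.finite_toSet fun i hi => (ht i hi).1
  refine not_isMeagre_of_isOpen (hW.inter (hW.preimage e.continuous)) ?_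
    (((hmeagre.union hUA).union (hUA.preimage_of_isOpenMap e.continuous e.isOpenMap)).mono ?_)
  · refine ⟨fun i => if i ∈ F then x₀ i else x₀ (σ.symm i), fun i hi => ?_, fun i hi => ?_⟩
    · change (if i ∈ F then _ else _) ∈ t i
      rw [if_pos (Finset.mem_coe.1 hi)]
      exact (ht i hi).2
    · change (if σ i ∈ F then _ else _) ∈ t i
      rw [if_neg (hσ i hi), σ.symm_apply_apply]
      exact (ht i hi).2
  · rintro x ⟨hx, hσx⟩
    have hxU := hFU hx
    have hσxU : x ∘ σ ∈ U := hFU hσx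
    by_cases hxA : x ∈ A <;> by_cases hσxA : x ∘ σ ∈ A
    · exact Or.inl (Or.inl ⟨hxA, hσxA⟩)
    · exact Or.inr ⟨hσxU, hσxA⟩
    · exact Or.inl (Or.inr ⟨hxU, hxA⟩)
    · exact Or.inl (Or.inr ⟨hxU, hxA⟩)

lemma exists_forall_neg_add_notMem {G : Type*} [AddGroup G] [Infinite G] (f : G → G)
    (F : Finset G) : ∃ u, ∀ i ∈ F, -u + f i ∉ F := by
  classical
  obtain ⟨u, hu⟩ := Infinite.exists_notMem_finset ((F ×ˢ F).image fun p => f p.1 - p.2)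
  refine ⟨u, fun i hi hmem => hu (Finset.mem_image.2 ⟨(i, -u + f i), Finset.mem_product.2
    ⟨hi, hmem⟩, ?_⟩)⟩
  simp [sub_eq_add_neg]

end Baire

section FrameSet

variable {Γ : Subgroup (Equiv.Perm (ℤ × ℤ))}
  {a : ℤ × ℤ → Quotient (frSetoid Γ) → Quotient (frSetoid Γ)}
  (hΓ : Γ ≤ latStab) (ha : IsStildeAction Γ a)

lemma measurableSet_cocycle_eq (ha_meas : ∀ g, Measurable (a g)) (g u : ℤ × ℤ) :
    MeasurableSet {x | cocycle hΓ ha x g = u} := by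
  have := countablySeparated_quotient hΓ
  simp_rw [cocycle_eq_iff hΓ ha]
  refine measurableSet_eq_fun_of_countablySeparated ((ha_meas g).comp measurable_quotient_mk'')
    (measurable_quotient_mk''.comp (Measurable.subtype_mk ?_))
  exact (continuous_shiftI _).measurable.comp measurable_subtype_coe

def frameSet (d : (ℤ × ℤ) × (ℤ × ℤ)) : Set ((ℤ × ℤ) → unitInterval) :=
  Subtype.val '' {x | (cocycle hΓ ha x (1, 0), cocycle hΓ ha x (0, 1)) = d}

lemma baireMeasurableSet_frameSet (ha_meas : ∀ g, Measurable (a g))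
    (d : (ℤ × ℤ) × (ℤ × ℤ)) : BaireMeasurableSet (frameSet hΓ ha d) := by
  have hmeas : MeasurableSet
      {x | (cocycle hΓ ha x (1, 0), cocycle hΓ ha x (0, 1)) = d} := by
    obtain ⟨d₁, d₂⟩ := d
    simp only [Prod.mk.injEq]
    exact (measurableSet_cocycle_eq hΓ ha ha_meas _ _).inter
      (measurableSet_cocycle_eq hΓ ha ha_meas _ _)
  obtain ⟨B, hB, hBx⟩ := MeasurableSpace.measurableSet_comap.1 hmeas
  rw [frameSet, ← hBx, Subtype.image_preimage_coe]
  exact (BaireMeasurableSet.of_mem_residual FrSet_mem_residual).inter hB.baireMeasurableSet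

lemma exists_not_isMeagre_frameSet : ∃ d, ¬IsMeagre (frameSet hΓ ha d) := by
  by_contra! h
  refine not_isMeagre_of_mem_residual FrSet_mem_residual ((isMeagre_iUnion h).mono ?_)
  exact fun x hx => Set.mem_iUnion.2 ⟨_, ⟨x, hx⟩, rfl, rfl⟩

/-- The cocycle at `x ∘ (⟨-u⟩ * γ)` is `γ⁻¹ ∘ c_x`; both are additive, so if they agreed on the
standard basis, `γ⁻¹` would fix the range of the surjective `c_x`. -/
lemma frameSet_inter_preimage_eq_empty {γ : Equiv.Perm (ℤ × ℤ)} (hγ : γ ∈ Γ) (hγ1 : γ ≠ 1)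
    (u : ℤ × ℤ) (d : (ℤ × ℤ) × (ℤ × ℤ)) :
    frameSet hΓ ha d ∩ (· ∘ ⇑(trAut (-u) * γ)) ⁻¹' frameSet hΓ ha d = ∅ := by
  refine Set.eq_empty_of_forall_notMem ?_
  rintro _ ⟨⟨x, hx, rfl⟩, ⟨y, hy, hyx⟩⟩
  have hy' : y = frShift (hΓ (inv_mem hγ)).1 (frTranslate u x) := Subtype.ext hyx
  have hcy : ∀ g, cocycle hΓ ha y g = γ⁻¹ (cocycle hΓ ha x g) := fun g => by
    rw [hy', cocycle_frShift hΓ ha (inv_mem hγ), cocycle_frTranslate]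
  obtain ⟨h₁, h₂⟩ := Prod.mk.inj (hx.trans hy.symm)
  have hfix : (fun g => γ⁻¹ (cocycle hΓ ha x g)) = cocycle hΓ ha x :=
    eq_of_map_add
      (fun p q => by rw [cocycle_add hΓ ha, map_add_of_mem_latStab (hΓ (inv_mem hγ))])
      (cocycle_add hΓ ha x) (by rw [← hcy, h₁]) (by rw [← hcy, h₂])
  refine hγ1 (inv_eq_one.1 (Equiv.ext fun v => ?_))
  obtain ⟨g, rfl⟩ := cocycle_surjective hΓ ha x v
  exact congrFun hfix g

end FrameSet

end Paper

open Paper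

theorem Stilde_not_schreier_general (Γ : Subgroup (Equiv.Perm (ℤ × ℤ)))
    (hΓAut : Γ ≤ latAut) (hΓnontriv : Γ ≠ ⊥)
    (hfix : ∀ γ ∈ Γ, γ (0 : ℤ × ℤ) = 0) :
    ¬ (letI : MeasurableSpace (Quotient (frSetoid Γ)) :=
        MeasurableSpace.map (Quotient.mk (frSetoid Γ)) inferInstance
       IsSchreierZ2 (Stilde Γ)) := by
  rintro ⟨a, ha_meas, zero_act, add_act, free, Stilde_eq⟩
  have hΓ : Γ ≤ latStab := fun γ hγ => ⟨hΓAut hγ, hfix γ hγ⟩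
  have ha : IsStildeAction Γ a := ⟨zero_act, add_act, free, Stilde_eq⟩
  obtain ⟨⟨γ, hγ⟩, hγ1⟩ := Subgroup.ne_bot_iff_exists_ne_one.1 hΓnontriv
  obtain ⟨d, hd⟩ := exists_not_isMeagre_frameSet hΓ ha
  obtain ⟨-, ⟨u, rfl⟩, hmeagre⟩ := exists_not_isMeagre_inter_preimage_comp
    (baireMeasurableSet_frameSet hΓ ha ha_meas d) hd (S := Set.range fun u => trAut (-u) * γ)
    fun F => let ⟨u, hu⟩ := exists_forall_neg_add_notMem γ F; ⟨_, ⟨u, rfl⟩, hu⟩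
  rw [frameSet_inter_preimage_eq_empty hΓ ha hγ (by simpa using hγ1) u d] at hmeagre
  exact hmeagre IsMeagre.empty

/-- For a nontrivial subgroup `Γ` of `Aut(Cay(ℤ², E))` fixing `0` and closed under
conjugation by translations, the graph `S̃_Γ`, with the quotient Borel structure on
`Fr_Γ/Γ`, is not the Schreier graph of a free Borel action of `ℤ²`. -/
theorem Stilde_not_schreier (Γ : Subgroup (Equiv.Perm (ℤ × ℤ)))
    (hΓAut : Γ ≤ latAut) (hΓnontriv : Γ ≠ ⊥)
    (hfix : ∀ γ ∈ Γ, γ (0 : ℤ × ℤ) = 0)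
    (hconj : ∀ γ ∈ Γ, ∀ v : ℤ × ℤ, (trAut (γ v))⁻¹ * γ * trAut v ∈ Γ) :
    ¬ (letI : MeasurableSpace (Quotient (frSetoid Γ)) :=
        MeasurableSpace.map (Quotient.mk (frSetoid Γ)) inferInstance
       IsSchreierZ2 (Stilde Γ)) :=
  Stilde_not_schreier_general Γ hΓAut hΓnontriv hfix
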